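/- Equivalence between well-posedness and martingale flows under a domination condition: Assume there is a σ-finite Borel measure m on ℝ^d such that ν̄ ≪ m for every ν̄ ∈ 𝓡_0, and m is minimal (for every Borel A ⊆ ℝ^d with m(A) > 0 there exists ν̄ ∈ 𝓡_0 with ν̄(A) > 0). Consider: (i) for every ν̄ ∈ 𝓡_0 there exists a unique 𝓡-regular solution η^{ν̄} of the martingale problem with initial law ν̄, and ν̄ ↦ η^{ν̄} is Borel; (ii) there exists an 𝓡-regular martingale flow, and 𝓡-regular martingale flows are m-a.e. unique (any two coincide for m-a.e. x ∈ ℝ^d). If 𝓡 is stable under convex combinations and satisfies bounded-disintegration stability, then (i) ⟹ (ii). If 𝓡 is stable under convex combinations and satisfies absolutely-continuous-disintegration stability, then (ii) ⟹ (i). -/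

import Mathlib

open MeasureTheory Set Filter
open scoped ENNReal NNReal RealInnerProductSpace

noncomputable section

/-- Euclidean space ℝ^d. -/
abbrev Ed (d : ℕ) := EuclideanSpace ℝ (Fin d)

/-- Frobenius norm of a `d × d` matrix. -/
def mnorm {d : ℕ} (M : Matrix (Fin d) (Fin d) ℝ) : ℝ :=
  Real.sqrt (∑ i, ∑ j, (M i j) ^ 2)

/-- Time derivative `∂_t f`. -/
def tderiv {d : ℕ} (f : ℝ → Ed d → ℝ) (t : ℝ) (x : Ed d) : ℝ :=
  deriv (fun s => f s x) t

/-- Second spatial partial derivative `∂²_{ij} g`. -/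
def pderiv2 {d : ℕ} (g : Ed d → ℝ) (i j : Fin d) (x : Ed d) : ℝ :=
  iteratedFDeriv ℝ 2 g x ![EuclideanSpace.single i 1, EuclideanSpace.single j 1]

/-- The diffusion operator `L f = (1/2) a : ∇²f + b · ∇f`. -/
def Lop {d : ℕ} (a : ℝ → Ed d → Matrix (Fin d) (Fin d) ℝ) (b : ℝ → Ed d → Ed d)
    (f : ℝ → Ed d → ℝ) (t : ℝ) (x : Ed d) : ℝ :=
  (1 / 2) * (∑ i, ∑ j, a t x i j * pderiv2 (f t) i j x) + (inner ℝ (b t x) (gradient (f t) x) : ℝ)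

/-- `f ∈ C^{1,2}_b((S,T) × ℝ^d)`: bounded, once continuously differentiable in time and
twice in space on `(S,T) × ℝ^d`, with bounded derivatives (extending continuously to
`[S,T] × ℝ^d`). -/
structure C12b {d : ℕ} (S T : ℝ) (f : ℝ → Ed d → ℝ) : Prop where
  cont : Continuous (Function.uncurry f)
  tdiff : ∀ x, ∀ t ∈ Ioo S T, DifferentiableAt ℝ (fun s => f s x) t
  xdiff : ∀ t ∈ Ioo S T, ContDiff ℝ 2 (f t)
  bdd : ∃ M : ℝ, ∀ t ∈ Ioo S T, ∀ x,
    |f t x| + |tderiv f t x| + ‖gradient (f t) x‖ + ‖iteratedFDeriv ℝ 2 (f t) x‖ ≤ M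

/-- `f ∈ C^{1,2}_c((S,T) × ℝ^d)`: in addition compactly supported in `(S,T) × ℝ^d`. -/
structure C12c {d : ℕ} (S T : ℝ) (f : ℝ → Ed d → ℝ) extends C12b S T f : Prop where
  supp : ∃ K : Set (ℝ × Ed d), IsCompact K ∧ K ⊆ (Ioo S T) ×ˢ (univ : Set (Ed d)) ∧
    ∀ p : ℝ × Ed d, p ∉ K → f p.1 p.2 = 0

/-- Narrow continuity of a curve of (finite) measures on the time interval `[S,T]`. -/
def NarrowlyCts {d : ℕ} (S T : ℝ) (ν : ℝ → Measure (Ed d)) : Prop :=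
  ∀ f : BoundedContinuousFunction (Ed d) ℝ,
    ContinuousOn (fun t => ∫ x, f x ∂(ν t)) (Icc S T)

/-- `(ν_t)` is a (measure-valued) weak solution of the Fokker–Planck equation
`∂_t ν_t = L_t^* ν_t` on `(S,T) × ℝ^d`. -/
structure IsFPE {d : ℕ} (S T : ℝ) (a : ℝ → Ed d → Matrix (Fin d) (Fin d) ℝ)
    (b : ℝ → Ed d → Ed d) (ν : ℝ → Measure (Ed d)) : Prop where
  meas : ∀ A : Set (Ed d), MeasurableSet A → Measurable fun t => ν t A
  integ : (∫⁻ t in Ioo S T, ∫⁻ x, ENNReal.ofReal (mnorm (a t x) + ‖b t x‖) ∂(ν t)) ≠ ∞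
  weak : ∀ f, C12c S T f →
    (∫ t in Ioo S T, ∫ x, (tderiv f t x + Lop a b f t x) ∂(ν t)) = 0

/-- The path space `C([S,T]; ℝ^d)`. -/
abbrev PathSp (d : ℕ) (S T : ℝ) := C(Icc S T, Ed d)

instance {d : ℕ} (S T : ℝ) : MeasurableSpace (PathSp d S T) := borel _
instance {d : ℕ} (S T : ℝ) : BorelSpace (PathSp d S T) := ⟨rfl⟩

/-- Evaluation map `e_t` on path space (with time clamped to `[S,T]`). -/
def eval {d : ℕ} {S T : ℝ} (h : S ≤ T) (t : ℝ) (γ : PathSp d S T) : Ed d :=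
  γ (projIcc S T h t)

/-- The natural filtration `F_t = σ(e_s : s ∈ [S,t])` on path space. -/
def natFilt {d : ℕ} {S T : ℝ} (h : S ≤ T) (t : ℝ) : MeasurableSpace (PathSp d S T) :=
  ⨆ s ∈ Icc S t, MeasurableSpace.comap (eval h s) inferInstance

/-- `X` is a martingale on `[S,T]` under `η` w.r.t. the natural filtration of path space. -/
def IsMartOn {d : ℕ} {S T : ℝ} (h : S ≤ T) (η : Measure (PathSp d S T))
    (X : ℝ → PathSp d S T → ℝ) : Prop :=
  (∀ t ∈ Icc S T, Integrable (X t) η) ∧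
  ∀ s t : ℝ, s ∈ Icc S T → t ∈ Icc S T → s ≤ t →
    η[X t | natFilt h s] =ᵐ[η] X s

/-- The process `t ↦ f_t(e_t) - ∫_S^t (∂_r f + L_r f)(e_r) dr`. -/
def MPproc {d : ℕ} {S T : ℝ} (h : S ≤ T) (a : ℝ → Ed d → Matrix (Fin d) (Fin d) ℝ)
    (b : ℝ → Ed d → Ed d) (f : ℝ → Ed d → ℝ) (t : ℝ) (γ : PathSp d S T) : ℝ :=
  f t (eval h t γ) -
    ∫ s in Ioc S t, (tderiv f s (eval h s γ) + Lop a b f s (eval h s γ))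

/-- `η` is a solution of the martingale problem associated to `L(a,b)` on `[S,T]`. -/
structure IsMP {d : ℕ} {S T : ℝ} (h : S ≤ T) (a : ℝ → Ed d → Matrix (Fin d) (Fin d) ℝ)
    (b : ℝ → Ed d → Ed d) (η : Measure (PathSp d S T)) : Prop where
  prob : IsProbabilityMeasure η
  integ : (∫⁻ γ, (∫⁻ t in Ioo S T,
      ENNReal.ofReal (mnorm (a t (eval h t γ)) + ‖b t (eval h t γ)‖)) ∂η) ≠ ∞
  mart : ∀ f, C12b S T f → IsMartOn h η (MPproc h a b f)


variable {d : ℕ} {T : ℝ}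

/-- `η` is an `𝓡`-regular solution of the MP. -/
def RRegMP (h : (0:ℝ) ≤ T) (a : ℝ → Ed d → Matrix (Fin d) (Fin d) ℝ)
    (b : ℝ → Ed d → Ed d) (R : Set (ℝ → Measure (Ed d)))
    (η : Measure (PathSp d 0 T)) : Prop :=
  IsMP h a b η ∧ ∃ μ ∈ R, ∀ t ∈ Icc (0:ℝ) T, Measure.map (eval h t) η = μ t

/-- `(η(x))_{x∈ℝ^d}` is an `𝓡`-regular martingale flow. -/
def IsRMF (h : (0:ℝ) ≤ T) (a : ℝ → Ed d → Matrix (Fin d) (Fin d) ℝ)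
    (b : ℝ → Ed d → Ed d) (R : Set (ℝ → Measure (Ed d)))
    (ηx : Ed d → Measure (PathSp d 0 T)) : Prop :=
  (∀ A : Set (PathSp d 0 T), MeasurableSet A → Measurable fun x => ηx x A) ∧
  (∀ x, IsProbabilityMeasure (ηx x)) ∧
  (∀ x, Measure.map (eval h 0) (ηx x) = Measure.dirac x) ∧
  ∀ ν₀ : Measure (Ed d), (∃ μ ∈ R, μ 0 = ν₀) → RRegMP h a b R (ν₀.bind ηx)

/-- Stability of `𝓡`-regularity under convex combinations. -/
def ConvexStable (h : (0:ℝ) ≤ T) (a : ℝ → Ed d → Matrix (Fin d) (Fin d) ℝ)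
    (b : ℝ → Ed d → Ed d) (R : Set (ℝ → Measure (Ed d))) : Prop :=
  ∀ (Z : Type) (_ : MeasurableSpace Z) (νZ : Measure Z), IsProbabilityMeasure νZ →
    ∀ ηz : Z → Measure (PathSp d 0 T),
    (∀ A : Set (PathSp d 0 T), MeasurableSet A → Measurable fun z => ηz z A) →
    (∀ᵐ z ∂νZ, RRegMP h a b R (ηz z)) →
    ((∫⁻ z, (∫⁻ t in Ioo (0:ℝ) T,
        ∫⁻ x, ENNReal.ofReal (‖b t x‖ + mnorm (a t x))
          ∂(Measure.map (eval h t) (ηz z))) ∂νZ) ≠ ∞) →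
    RRegMP h a b R (νZ.bind ηz)

/-- `(ηx)` is a regular conditional probability of `η` with respect to `e₀`. -/
def IsRCP (h : (0:ℝ) ≤ T) (η : Measure (PathSp d 0 T))
    (ηx : Ed d → Measure (PathSp d 0 T)) : Prop :=
  (∀ A : Set (PathSp d 0 T), MeasurableSet A → Measurable fun x => ηx x A) ∧
  (∀ x, IsProbabilityMeasure (ηx x)) ∧
  ((Measure.map (eval h 0) η).bind ηx = η) ∧
  (∀ᵐ x ∂(Measure.map (eval h 0) η), ηx x {γ | eval h 0 γ = x} = 1)

/-- Bounded-disintegration stability (eq:stability-convex-conditioning-bounded). -/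
def BoundedDisintStable (h : (0:ℝ) ≤ T)
    (a : ℝ → Ed d → Matrix (Fin d) (Fin d) ℝ)
    (b : ℝ → Ed d → Ed d) (R : Set (ℝ → Measure (Ed d))) : Prop :=
  ∀ η : Measure (PathSp d 0 T), RRegMP h a b R η →
    ∀ ηx : Ed d → Measure (PathSp d 0 T), IsRCP h η ηx →
    ∀ ν₀ : Measure (Ed d), IsProbabilityMeasure ν₀ →
    (∃ C : ℝ≥0, 0 < C ∧ ν₀ ≤ C • Measure.map (eval h 0) η) →
    RRegMP h a b R (ν₀.bind ηx)

/-- Absolutely-continuous-disintegration stability (eq:stability-convex-conditioning). -/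
def ACDisintStable (h : (0:ℝ) ≤ T)
    (a : ℝ → Ed d → Matrix (Fin d) (Fin d) ℝ)
    (b : ℝ → Ed d → Ed d) (R : Set (ℝ → Measure (Ed d))) : Prop :=
  ∀ η : Measure (PathSp d 0 T), RRegMP h a b R η →
    ∀ ηx : Ed d → Measure (PathSp d 0 T), IsRCP h η ηx →
    ∀ ν₀ : Measure (Ed d), (∃ μ ∈ R, μ 0 = ν₀) →
    ν₀ ≪ Measure.map (eval h 0) η →
    RRegMP h a b R (ν₀.bind ηx)

/-!
Write `𝓡₀` for the initial laws of curves in `𝓡`. Since `m` dominates `𝓡₀` and is minimal, a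
Halmos–Savage exhaustion yields countably many `νₙ ∈ 𝓡₀` such that every set null for all of
them is `m`-null. Given a regular solution `ηₙ` from each `νₙ`, convex stability makes a mixture
`∑ cₙ ηₙ` regular (with weights small enough to keep the coefficient integrals summable), so its
initial law `ν̂` lies in `𝓡₀` and `m ≪ ν̂`.

(i) ⟹ (ii): the flow is a disintegration `κ` of the solution `η̂` from `ν̂` along `e₀`. For
`ν̄ ∈ 𝓡₀`, disintegrate `½ η^{ν̄} + ½ η̂`: by bounded-disintegration stability its integrals
against `ν̄` and `ν̂` are regular, so by uniqueness at `ν̂` it also disintegrates `η̂`; hence it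
agrees with `κ` `ν̂`-a.e., thus `ν̄`-a.e. Two flows integrated against `ν̂` both give `η̂`, so
they agree `ν̂`-a.e., thus `m`-a.e.

(ii) ⟹ (i): the selection is `ν̄ ↦ ∫ η(x) dν̄`. If `η` is a regular solution from `ν̄`, the
disintegration of `½ η + ½ ∫ η(x) dν̂` is a flow by a.c.-disintegration stability, so it equals
the given flow `m`-a.e.; integrating it against `½ ν̄ + ½ ν̂` and cancelling the `ν̂` part gives
`η = ∫ η(x) dν̄`.
-/

namespace MeasureTheory.Measure.AbsolutelyContinuous

theorem measure_eq_zero_iff {α : Type*} [MeasurableSpace α] {μ ν : Measure α} [SFinite μ]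
    [ν.HaveLebesgueDecomposition μ] (hνμ : ν ≪ μ) {A : Set α} (hA : MeasurableSet A) :
    ν A = 0 ↔ μ (A ∩ {x | ν.rnDeriv μ x ≠ 0}) = 0 := by
  rw [← Measure.setLIntegral_rnDeriv hνμ A,
    setLIntegral_eq_zero_iff hA (Measure.measurable_rnDeriv _ _), ae_iff]
  simp only [Classical.not_imp, ofPred_and, ofPred_mem_eq]

end MeasureTheory.Measure.AbsolutelyContinuous

section HalmosSavage

variable {α ι : Type*} [MeasurableSpace α]

theorem exists_countable_ae_subset_biUnion (μ : Measure α) [IsFiniteMeasure μ] {S : ι → Set α}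
    (hS : ∀ i, MeasurableSet (S i)) (I : Set ι) :
    ∃ J ⊆ I, J.Countable ∧ ∀ i ∈ I, μ (S i \ ⋃ j ∈ J, S j) = 0 := by
  set F : Set ι → ℝ≥0∞ := fun J => μ (⋃ j ∈ J, S j)
  set 𝒥 : Set (Set ι) := {J | J ⊆ I ∧ J.Countable}
  obtain ⟨u, -, hu, hu𝒥⟩ := exists_seq_tendsto_sSup (S := F '' 𝒥)
    (Set.image_nonempty.2 ⟨∅, show ∅ ∈ 𝒥 from ⟨empty_subset I, countable_empty⟩⟩)
    (OrderTop.bddAbove _)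
  choose J hJ hFJ using hu𝒥
  have hJ₀ : (⋃ n, J n) ∈ 𝒥 :=
    ⟨iUnion_subset fun n => (hJ n).1, countable_iUnion fun n => (hJ n).2⟩
  have hmax : ∀ J' ∈ 𝒥, F J' ≤ F (⋃ n, J n) := fun J' hJ' =>
    (le_sSup (mem_image_of_mem F hJ')).trans <| le_of_tendsto' hu fun n => hFJ n ▸
      measure_mono (biUnion_subset_biUnion_left (subset_iUnion J n))
  refine ⟨⋃ n, J n, hJ₀.1, hJ₀.2, fun i hi => ?_⟩
  have hU : MeasurableSet (⋃ j ∈ ⋃ n, J n, S j) := .biUnion hJ₀.2 fun j _ => hS j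
  have hins := hmax (insert i (⋃ n, J n)) ⟨insert_subset hi hJ₀.1, hJ₀.2.insert i⟩
  simp only [F, biUnion_insert] at hins
  rw [union_comm, ← union_sdiff_self, measure_union disjoint_sdiff_right ((hS i).diff hU)] at hins
  exact nonpos_iff_eq_zero.1 <|
    ENNReal.le_of_add_le_add_left (measure_ne_top _ _) (by rwa [add_zero])

theorem exists_countable_absolutelyContinuous_of_minimal {m : Measure α} [SFinite m]
    {M : Set (Measure α)} (hSF : ∀ ν ∈ M, SFinite ν) (hac : ∀ ν ∈ M, ν ≪ m)
    (hmin : ∀ A, MeasurableSet A → 0 < m A → ∃ ν ∈ M, 0 < ν A) :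
    ∃ C ⊆ M, C.Countable ∧ ∀ A, MeasurableSet A → (∀ ν ∈ C, ν A = 0) → m A = 0 := by
  obtain ⟨m', _, hmm', -⟩ := exists_isFiniteMeasure_absolutelyContinuous m
  set S : Measure α → Set α := fun ν => {x | ν.rnDeriv m' x ≠ 0}
  have hnull : ∀ ν ∈ M, ∀ A, MeasurableSet A → (ν A = 0 ↔ m' (A ∩ S ν) = 0) :=
    fun ν hν _ hA => haveI := hSF ν hν; ((hac ν hν).trans hmm').measure_eq_zero_iff hA
  obtain ⟨C, hCM, hC, hcover⟩ := exists_countable_ae_subset_biUnion m'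
    (fun ν => (Measure.measurable_rnDeriv ν m') (measurableSet_singleton 0).compl) M
  refine ⟨C, hCM, hC, fun A hA hCA => ?_⟩
  by_contra hmA
  obtain ⟨ν, hν, hνA⟩ := hmin A hA (pos_iff_ne_zero.2 hmA)
  refine hνA.ne' ((hnull ν hν A hA).2 (measure_mono_null (t := (S ν \ ⋃ c ∈ C, S c) ∪
    ⋃ c ∈ C, A ∩ S c) ?_ (measure_union_null (hcover ν hν) ?_)))
  · rintro x ⟨hxA, hxS⟩
    by_cases hx : x ∈ ⋃ c ∈ C, S c
    · obtain ⟨c, hc, hxc⟩ := mem_iUnion₂.1 hx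
      exact Or.inr (mem_iUnion₂.2 ⟨c, hc, hxA, hxc⟩)
    · exact Or.inl ⟨hxS, hx⟩
  · exact (measure_biUnion_null_iff hC).2 fun c hc => (hnull c (hCM hc) A hA).1 (hCA c hc)

end HalmosSavage

theorem ENNReal.exists_tsum_eq_one_tsum_mul_ne_top {ι : Type*} [Countable ι] [Nonempty ι]
    (w : ι → ℝ≥0∞) (hw : ∀ i, w i ≠ ∞) :
    ∃ c : ι → ℝ≥0∞, (∀ i, c i ≠ 0) ∧ ∑' i, c i = 1 ∧ ∑' i, c i * w i ≠ ∞ := by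
  obtain ⟨δ, hδ, hsum⟩ := ENNReal.exists_pos_tsum_mul_lt_of_countable one_ne_zero
    (fun i => 1 + w i) fun i => ENNReal.add_ne_top.2 ⟨ENNReal.one_ne_top, hw i⟩
  set D := ∑' i, (δ i : ℝ≥0∞)
  have hD : D ≤ ∑' i, (1 + w i) * δ i :=
    ENNReal.tsum_le_tsum fun i => le_mul_of_one_le_left' le_self_add
  have hD0 : D ≠ 0 := fun h =>
    (hδ (Classical.arbitrary ι)).ne' (by exact_mod_cast ENNReal.tsum_eq_zero.1 h _)
  have hDtop : D ≠ ∞ := (hD.trans_lt (hsum.trans ENNReal.one_lt_top)).ne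
  refine ⟨fun i => δ i / D, fun i => ?_, ?_, ?_⟩
  · exact ENNReal.div_ne_zero.2 ⟨by exact_mod_cast (hδ i).ne', hDtop⟩
  · simp only [div_eq_mul_inv, ENNReal.tsum_mul_right]
    exact ENNReal.mul_inv_cancel hD0 hDtop
  · simp only [div_eq_mul_inv, mul_right_comm _ D⁻¹, ENNReal.tsum_mul_right]
    refine ENNReal.mul_ne_top (ne_top_of_le_ne_top (hsum.trans ENNReal.one_lt_top).ne ?_)
      (ENNReal.inv_ne_top.2 hD0)
    exact ENNReal.tsum_le_tsum fun i => by rw [mul_comm]; gcongr; exact le_add_self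

namespace MeasureTheory.Measure

variable {α : Type*} [MeasurableSpace α]

def avg (μ ν : Measure α) : Measure α :=
  (2⁻¹ : ℝ≥0∞) • μ + (2⁻¹ : ℝ≥0∞) • ν

instance isProbabilityMeasure_avg (μ ν : Measure α) [IsProbabilityMeasure μ]
    [IsProbabilityMeasure ν] : IsProbabilityMeasure (avg μ ν) :=
  ⟨by simp [avg, ENNReal.inv_two_add_inv_two]⟩

theorem avg_comm (μ ν : Measure α) : avg μ ν = avg ν μ :=
  add_comm _ _

theorem le_two_smul_avg (μ ν : Measure α) : μ ≤ (2 : ℝ≥0) • avg μ ν := by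
  rw [avg, ENNReal.smul_def, smul_add, smul_smul, smul_smul, ENNReal.coe_ofNat,
    ENNReal.mul_inv_cancel two_ne_zero ENNReal.ofNat_ne_top, one_smul]
  exact Measure.le_add_right le_rfl

theorem absolutelyContinuous_avg (μ ν : Measure α) : μ ≪ avg μ ν :=
  absolutelyContinuous_of_le_smul (le_two_smul_avg μ ν)

theorem eq_of_avg_eq_avg {μ₁ μ₂ θ : Measure α} [IsFiniteMeasure θ]
    (h : avg μ₁ θ = avg μ₂ θ) : μ₁ = μ₂ := by
  ext s hs
  have hs' := congrArg (· s) h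
  simp only [avg, add_apply, smul_apply, smul_eq_mul] at hs'
  rw [ENNReal.add_left_inj (ENNReal.mul_ne_top (by simp) (measure_ne_top θ s))] at hs'
  exact (ENNReal.mul_right_inj (by simp) (by simp)).1 hs'

theorem map_avg {β : Type*} [MeasurableSpace β] {f : α → β} (hf : Measurable f)
    (μ ν : Measure α) : (avg μ ν).map f = avg (μ.map f) (ν.map f) := by
  rw [avg, avg, Measure.map_add _ _ hf, Measure.map_smul, Measure.map_smul]

theorem avg_bind {β : Type*} [MeasurableSpace β] {κ : α → Measure β} (hκ : Measurable κ)
    (μ ν : Measure α) : (avg μ ν).bind κ = avg (μ.bind κ) (ν.bind κ) := by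
  ext s hs
  simp only [avg, add_apply, smul_apply, bind_apply hs hκ.aemeasurable, lintegral_add_measure,
    lintegral_smul_measure]

end MeasureTheory.Measure

section Fibres

open ProbabilityTheory

variable {X Ω : Type*} [MeasurableSpace X] [MeasurableSpace Ω] {π : Ω → X}

theorem map_eq_dirac_iff_ae_eq [MeasurableSingletonClass X] (hπ : Measurable π) {μ : Measure Ω}
    [IsProbabilityMeasure μ] {x : X} : μ.map π = Measure.dirac x ↔ ∀ᵐ ω ∂μ, π ω = x := by
  refine ⟨fun h => ae_of_ae_map (p := fun y => y = x) hπ.aemeasurable ?_, fun h => ?_⟩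
  · rw [h]
    exact (ae_dirac_iff (measurableSet_singleton x)).2 rfl
  · rw [Measure.map_congr h, Measure.map_const, measure_univ, one_smul]

theorem map_eq_dirac_iff_measure_fibre_eq_one [MeasurableSingletonClass X] (hπ : Measurable π)
    {μ : Measure Ω} [IsProbabilityMeasure μ] {x : X} :
    μ.map π = Measure.dirac x ↔ μ {ω | π ω = x} = 1 := by
  rw [map_eq_dirac_iff_ae_eq hπ, ae_iff_measure_eq (p := fun ω => π ω = x)
    (hπ (measurableSet_singleton x)).nullMeasurableSet, measure_univ]

namespace MeasureTheory.Measure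

theorem map_bind {Y : Type*} [MeasurableSpace Y] {f : Ω → Y} (hf : Measurable f)
    {κ : X → Measure Ω} (hκ : Measurable κ) (ν : Measure X) :
    (ν.bind κ).map f = ν.bind fun x => (κ x).map f := by
  have hκf : Measurable fun x => (κ x).map f := (measurable_map f hf).comp hκ
  ext s hs
  rw [map_apply hf hs, bind_apply (hf hs) hκ.aemeasurable, bind_apply hs hκf.aemeasurable]
  simp only [map_apply hf hs]

end MeasureTheory.Measure

theorem map_bind_of_ae_map_eq_dirac (hπ : Measurable π) {κ : X → Measure Ω} (hκ : Measurable κ)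
    {ν : Measure X} (h : ∀ᵐ x ∂ν, (κ x).map π = Measure.dirac x) : (ν.bind κ).map π = ν := by
  rw [Measure.map_bind hπ hκ, Measure.bind_congr_right h, Measure.bind_dirac]

theorem map_prodMk_bind_eq_compProd [MeasurableSingletonClass X] (hπ : Measurable π)
    {κ : X → Measure Ω} (hκ : Measurable κ) (hκp : ∀ x, IsProbabilityMeasure (κ x))
    {ν : Measure X} [SFinite ν] (h : ∀ᵐ x ∂ν, (κ x).map π = Measure.dirac x) :
    (ν.bind κ).map (fun ω => (π ω, ω)) = ν ⊗ₘ (⟨κ, hκ⟩ : Kernel X Ω) := by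
  have : IsMarkovKernel (⟨κ, hκ⟩ : Kernel X Ω) := ⟨hκp⟩
  rw [Measure.map_bind (hπ.prodMk measurable_id : Measurable fun ω => (π ω, ω)) hκ,
    Measure.compProd_eq_comp_prod]
  refine Measure.bind_congr_right ?_
  filter_upwards [h] with x hx
  rw [Kernel.prod_apply, Kernel.id_apply, Measure.dirac_prod]
  exact Measure.map_congr (((map_eq_dirac_iff_ae_eq hπ).1 hx).mono fun ω hω => by simp [hω])

theorem ae_eq_of_bind_eq [MeasurableSingletonClass X] [MeasurableSpace.CountablyGenerated Ω]
    (hπ : Measurable π) {κ₁ κ₂ : X → Measure Ω} (hκ₁ : Measurable κ₁) (hκ₂ : Measurable κ₂)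
    (hκ₁p : ∀ x, IsProbabilityMeasure (κ₁ x)) (hκ₂p : ∀ x, IsProbabilityMeasure (κ₂ x))
    {ν : Measure X} [IsFiniteMeasure ν] (h₁ : ∀ᵐ x ∂ν, (κ₁ x).map π = Measure.dirac x)
    (h₂ : ∀ᵐ x ∂ν, (κ₂ x).map π = Measure.dirac x) (h : ν.bind κ₁ = ν.bind κ₂) :
    κ₁ =ᵐ[ν] κ₂ := by
  have : IsMarkovKernel (⟨κ₁, hκ₁⟩ : Kernel X Ω) := ⟨hκ₁p⟩
  have : IsMarkovKernel (⟨κ₂, hκ₂⟩ : Kernel X Ω) := ⟨hκ₂p⟩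
  refine Kernel.ae_eq_of_compProd_eq (κ := ⟨κ₁, hκ₁⟩) (η := ⟨κ₂, hκ₂⟩) ?_
  rw [← map_prodMk_bind_eq_compProd hπ hκ₁ hκ₁p h₁, ← map_prodMk_bind_eq_compProd hπ hκ₂ hκ₂p h₂,
    h]

theorem exists_disintegration_of_rightInverse [MeasurableSingletonClass X] [MeasurableEq X]
    [StandardBorelSpace Ω] [Nonempty Ω] (hπ : Measurable π) {s : X → Ω} (hs : Measurable s)
    (hπs : ∀ x, π (s x) = x) (η : Measure Ω) [IsProbabilityMeasure η] :
    ∃ κ : X → Measure Ω, Measurable κ ∧ (∀ x, IsProbabilityMeasure (κ x)) ∧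
      (η.map π).bind κ = η ∧ ∀ x, (κ x).map π = Measure.dirac x := by
  have hπid : Measurable fun ω => (π ω, ω) := hπ.prodMk measurable_id
  set ρ := η.map fun ω => (π ω, ω)
  have hρ : (η.map π) ⊗ₘ ρ.condKernel = ρ := by
    rw [← Measure.fst_map_prodMk measurable_id (μ := η)]
    exact ρ.disintegrate ρ.condKernel
  have hgraph : MeasurableSet {p : X × Ω | π p.2 = p.1} :=
    measurableSet_eq_fun (hπ.comp measurable_snd) measurable_fst
  set D := {x | ρ.condKernel x {ω | π ω = x} = 1}
  have hD : MeasurableSet D :=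
    Kernel.measurable_kernel_prodMk_left hgraph (measurableSet_singleton 1)
  have hD_ae : ∀ᵐ x ∂η.map π, x ∈ D := by
    have hρ_graph : ∀ᵐ p ∂ρ, π p.2 = p.1 :=
      (ae_map_iff hπid.aemeasurable hgraph).2 (ae_of_all _ fun _ => rfl)
    rw [← hρ] at hρ_graph
    filter_upwards [Measure.ae_ae_of_ae_compProd hρ_graph] with x hx
    exact (map_eq_dirac_iff_measure_fibre_eq_one hπ).1 ((map_eq_dirac_iff_ae_eq hπ).2 hx)
  -- `ρ.condKernel x` lives on the fibre over `x` only for a.e. `x`; elsewhere use `dirac (s x)`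
  refine ⟨fun x => if x ∈ D then ρ.condKernel x else Measure.dirac (s x),
    Measurable.ite hD ρ.condKernel.measurable (Measure.measurable_dirac.comp hs),
    fun x => by dsimp only; split_ifs <;> infer_instance, ?_, fun x => ?_⟩
  · rw [Measure.bind_congr_right (hD_ae.mono fun x hx => if_pos hx)]
    have hsnd := congrArg Measure.snd hρ
    rw [Measure.snd_compProd] at hsnd
    rw [hsnd, Measure.snd, Measure.map_map measurable_snd hπid]
    exact Measure.map_id
  · dsimp only
    split_ifs with hx
    · exact (map_eq_dirac_iff_measure_fibre_eq_one hπ).2 hx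
    · rw [Measure.map_dirac' hπ, hπs]

end Fibres

section PathSpace

variable {d : ℕ} {T : ℝ}

theorem measurable_eval {S : ℝ} (h : S ≤ T) (t : ℝ) : Measurable (eval (d := d) h t) :=
  (continuous_eval_const _).measurable

instance isProbabilityMeasure_map_eval {S : ℝ} (h : S ≤ T) (t : ℝ) (η : Measure (PathSp d S T))
    [IsProbabilityMeasure η] : IsProbabilityMeasure (η.map (eval h t)) :=
  Measure.isProbabilityMeasure_map (measurable_eval h t).aemeasurable

variable (h : (0 : ℝ) ≤ T)

theorem isRCP_bind_of_ae_map_eq_dirac {κ : Ed d → Measure (PathSp d 0 T)} (hκ : Measurable κ)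
    (hκp : ∀ x, IsProbabilityMeasure (κ x)) {ν : Measure (Ed d)}
    (hfib : ∀ᵐ x ∂ν, (κ x).map (eval h 0) = Measure.dirac x) : IsRCP h (ν.bind κ) κ := by
  have hlaw := map_bind_of_ae_map_eq_dirac (measurable_eval h 0) hκ hfib
  refine ⟨fun A hA => (Measure.measurable_coe hA).comp hκ, hκp, by rw [hlaw], ?_⟩
  rw [hlaw]
  exact hfib.mono fun x hx => (map_eq_dirac_iff_measure_fibre_eq_one (measurable_eval h 0)).1 hx

variable {h}

theorem IsRCP.ae_map_eq_dirac {η : Measure (PathSp d 0 T)} {κ : Ed d → Measure (PathSp d 0 T)}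
    (hκ : IsRCP h η κ) : ∀ᵐ x ∂η.map (eval h 0), (κ x).map (eval h 0) = Measure.dirac x :=
  hκ.2.2.2.mono fun x hx =>
    haveI := hκ.2.1 x; (map_eq_dirac_iff_measure_fibre_eq_one (measurable_eval h 0)).2 hx

theorem IsRCP.isRCP_bind_of_absolutelyContinuous {η : Measure (PathSp d 0 T)}
    {κ : Ed d → Measure (PathSp d 0 T)} (hκm : Measurable κ) (hκ : IsRCP h η κ)
    {ν : Measure (Ed d)} (hν : ν ≪ η.map (eval h 0)) : IsRCP h (ν.bind κ) κ :=
  isRCP_bind_of_ae_map_eq_dirac h hκm hκ.2.1 (hν.ae_le hκ.ae_map_eq_dirac)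

theorem IsRCP.ae_eq {η : Measure (PathSp d 0 T)} [IsProbabilityMeasure η]
    {κ₁ κ₂ : Ed d → Measure (PathSp d 0 T)} (hκ₁ : Measurable κ₁) (hκ₂ : Measurable κ₂)
    (h₁ : IsRCP h η κ₁) (h₂ : IsRCP h η κ₂) : κ₁ =ᵐ[η.map (eval h 0)] κ₂ :=
  ae_eq_of_bind_eq (measurable_eval h 0) hκ₁ hκ₂ h₁.2.1 h₂.2.1 h₁.ae_map_eq_dirac
    h₂.ae_map_eq_dirac (h₁.2.2.1.trans h₂.2.2.1.symm)

variable (h)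

theorem exists_isRCP_map_eq_dirac (η : Measure (PathSp d 0 T)) [IsProbabilityMeasure η] :
    ∃ κ : Ed d → Measure (PathSp d 0 T), Measurable κ ∧ IsRCP h η κ ∧
      ∀ x, (κ x).map (eval h 0) = Measure.dirac x := by
  obtain ⟨κ, hκ, hκp, hbind, hstart⟩ := exists_disintegration_of_rightInverse
    (measurable_eval h 0) ContinuousMap.continuous_const'.measurable (fun _ => rfl) η
  refine ⟨κ, hκ, ?_, hstart⟩
  simpa only [hbind] using
    isRCP_bind_of_ae_map_eq_dirac h hκ hκp (ν := η.map (eval h 0)) (ae_of_all _ hstart)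

end PathSpace

section Mixtures

variable {d : ℕ} {T : ℝ} (h : (0 : ℝ) ≤ T)
  (a : ℝ → Ed d → Matrix (Fin d) (Fin d) ℝ) (b : ℝ → Ed d → Ed d)

def initialLaws (R : Set (ℝ → Measure (Ed d))) : Set (Measure (Ed d)) :=
  {ν | ∃ μ ∈ R, μ 0 = ν}

def RRegSolvable (R : Set (ℝ → Measure (Ed d))) : Prop :=
  ∀ ν ∈ initialLaws R, ∃ η, RRegMP h a b R η ∧ η.map (eval h 0) = ν

def RRegUnique (R : Set (ℝ → Measure (Ed d))) : Prop :=
  ∀ η₁ η₂, RRegMP h a b R η₁ → RRegMP h a b R η₂ →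
    η₁.map (eval h 0) = η₂.map (eval h 0) → η₁ = η₂

def coeffIntegral (η : Measure (PathSp d 0 T)) : ℝ≥0∞ :=
  ∫⁻ t in Ioo (0 : ℝ) T, ∫⁻ x, ENNReal.ofReal (‖b t x‖ + mnorm (a t x)) ∂(η.map (eval h t))

variable {h a b} {R : Set (ℝ → Measure (Ed d))}

theorem RRegMP.map_eval_zero_mem {η : Measure (PathSp d 0 T)} (hη : RRegMP h a b R η) :
    η.map (eval h 0) ∈ initialLaws R :=
  let ⟨μ, hμR, hμ⟩ := hη.2
  ⟨μ, hμR, (hμ 0 ⟨le_rfl, h⟩).symm⟩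

theorem RRegMP.coeffIntegral_ne_top (hFPE : ∀ μ ∈ R, IsFPE 0 T a b μ)
    {η : Measure (PathSp d 0 T)} (hη : RRegMP h a b R η) : coeffIntegral h a b η ≠ ∞ := by
  obtain ⟨μ, hμR, hμ⟩ := hη.2
  refine ne_of_eq_of_ne (setLIntegral_congr_fun measurableSet_Ioo fun t ht => ?_)
    (hFPE μ hμR).integ
  simp only [hμ t (Ioo_subset_Icc_self ht), add_comm]

theorem ConvexStable.rRegMP_sum (hCS : ConvexStable h a b R) {ι : Type} [Countable ι]
    {c : ι → ℝ≥0∞} (hc : ∑' i, c i = 1) {η : ι → Measure (PathSp d 0 T)}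
    (hη : ∀ i, RRegMP h a b R (η i)) (hcost : ∑' i, c i * coeffIntegral h a b (η i) ≠ ∞) :
    RRegMP h a b R (Measure.sum fun i => c i • η i) := by
  let _ : MeasurableSpace ι := ⊤
  set νZ : Measure ι := Measure.sum fun i => c i • Measure.dirac i
  have hνZ : IsProbabilityMeasure νZ := ⟨by simp [νZ, hc]⟩
  have hlint : ∀ F : ι → ℝ≥0∞, ∫⁻ i, F i ∂νZ = ∑' i, c i * F i := fun F => by
    simp [νZ, lintegral_sum_measure, lintegral_smul_measure]
  have hbind : νZ.bind η = Measure.sum fun i => c i • η i := by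
    rw [Measure.bind_sum _ _ Measurable.of_discrete.aemeasurable]
    simp [Measure.bind_smul, Measure.dirac_bind Measurable.of_discrete]
  rw [← hbind]
  exact hCS ι ⊤ νZ hνZ η (fun _ _ => Measurable.of_discrete) (ae_of_all _ hη)
    (by rw [hlint]; exact hcost)

theorem ConvexStable.rRegMP_avg (hCS : ConvexStable h a b R)
    (hFPE : ∀ μ ∈ R, IsFPE 0 T a b μ) {η₁ η₂ : Measure (PathSp d 0 T)}
    (h₁ : RRegMP h a b R η₁) (h₂ : RRegMP h a b R η₂) : RRegMP h a b R (Measure.avg η₁ η₂) := by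
  have hmix := hCS.rRegMP_sum (c := fun _ => 2⁻¹) (η := fun i : Bool => cond i η₁ η₂)
    (by rw [tsum_fintype, Fintype.sum_bool, ENNReal.inv_two_add_inv_two])
    (fun i => by cases i <;> assumption)
    (by simp [tsum_fintype, ENNReal.mul_ne_top, h₁.coeffIntegral_ne_top hFPE,
      h₂.coeffIntegral_ne_top hFPE])
  simpa [Measure.sum_fintype, Measure.avg] using hmix

theorem exists_initialLaw_absolutelyContinuous (hCS : ConvexStable h a b R)
    (hFPE : ∀ μ ∈ R, IsFPE 0 T a b μ) {m : Measure (Ed d)} [SFinite m]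
    (hdomin : ∀ ν ∈ initialLaws R, ν ≪ m)
    (hmin : ∀ A, MeasurableSet A → 0 < m A → ∃ ν ∈ initialLaws R, 0 < ν A)
    (hsol : RRegSolvable h a b R) (hne : (initialLaws R).Nonempty) :
    ∃ ν' ∈ initialLaws R, m ≪ ν' := by
  have hprob : ∀ ν ∈ initialLaws R, IsProbabilityMeasure ν := fun ν hν => by
    obtain ⟨η, hη, rfl⟩ := hsol ν hν
    exact haveI := hη.1.prob; inferInstance
  obtain ⟨C, hCR, hC, hCm⟩ := exists_countable_absolutelyContinuous_of_minimal
    (fun ν hν => haveI := hprob ν hν; inferInstance) hdomin hmin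
  obtain ⟨ν₀, hν₀⟩ := hne
  have : Countable ↥(insert ν₀ C) := (hC.insert ν₀).to_subtype
  have : Nonempty ↥(insert ν₀ C) := ⟨⟨ν₀, mem_insert _ _⟩⟩
  choose η hη hηlaw using fun ν : ↥(insert ν₀ C) => hsol ν (insert_subset hν₀ hCR ν.2)
  obtain ⟨c, hc0, hc1, hcost⟩ := ENNReal.exists_tsum_eq_one_tsum_mul_ne_top
    (fun ν => coeffIntegral h a b (η ν)) fun ν => (hη ν).coeffIntegral_ne_top hFPE
  have hmix := hCS.rRegMP_sum hc1 hη hcost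
  refine ⟨_, hmix.map_eval_zero_mem, Measure.AbsolutelyContinuous.mk fun A hA hA0 =>
    hCm A hA fun ν hν => ?_⟩
  rw [Measure.map_apply (measurable_eval h 0) hA, Measure.sum_apply _ (measurable_eval h 0 hA),
    ENNReal.tsum_eq_zero] at hA0
  have hνA := hA0 ⟨ν, mem_insert_of_mem _ hν⟩
  rw [Measure.smul_apply, smul_eq_mul, ← Measure.map_apply (measurable_eval h 0) hA, hηlaw,
    mul_eq_zero] at hνA
  exact hνA.resolve_left (hc0 _)

end Mixtures

section Flows

variable {d : ℕ} {T : ℝ} {h : (0 : ℝ) ≤ T} {a : ℝ → Ed d → Matrix (Fin d) (Fin d) ℝ}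
  {b : ℝ → Ed d → Ed d} {R : Set (ℝ → Measure (Ed d))} {ηx : Ed d → Measure (PathSp d 0 T)}

theorem IsRMF.measurable (hf : IsRMF h a b R ηx) : Measurable ηx :=
  Measure.measurable_of_measurable_coe _ hf.1

theorem IsRMF.map_eval_bind (hf : IsRMF h a b R ηx) (ν : Measure (Ed d)) :
    (ν.bind ηx).map (eval h 0) = ν :=
  map_bind_of_ae_map_eq_dirac (measurable_eval h 0) hf.measurable (ae_of_all _ hf.2.2.1)

theorem IsRMF.isRCP_bind (hf : IsRMF h a b R ηx) (ν : Measure (Ed d)) :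
    IsRCP h (ν.bind ηx) ηx :=
  isRCP_bind_of_ae_map_eq_dirac h hf.measurable hf.2.1 (ae_of_all _ hf.2.2.1)

theorem BoundedDisintStable.rRegMP_bind_of_isRCP (hBD : BoundedDisintStable h a b R)
    (hCS : ConvexStable h a b R) (hFPE : ∀ μ ∈ R, IsFPE 0 T a b μ)
    (hsol : RRegSolvable h a b R) (huniq : RRegUnique h a b R)
    {η : Measure (PathSp d 0 T)} (hη : RRegMP h a b R η) {κ : Ed d → Measure (PathSp d 0 T)}
    (hκ : Measurable κ) (hrcp : IsRCP h η κ) {ν : Measure (Ed d)} (hν : ν ∈ initialLaws R)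
    (hνη : ν ≪ η.map (eval h 0)) : RRegMP h a b R (ν.bind κ) := by
  obtain ⟨η₀, hη₀, rfl⟩ := hsol ν hν
  have hmix := hCS.rRegMP_avg hFPE hη₀ hη
  have := hη₀.1.prob
  have := hη.1.prob
  obtain ⟨κ', hκ', hrcp', -⟩ := exists_isRCP_map_eq_dirac h (Measure.avg η₀ η)
  have hlaw := Measure.map_avg (measurable_eval h 0) η₀ η
  have hBD' : ∀ μ : Measure (Ed d), IsProbabilityMeasure μ →
      μ ≤ (2 : ℝ≥0) • Measure.avg (η₀.map (eval h 0)) (η.map (eval h 0)) →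
      RRegMP h a b R (μ.bind κ') := fun μ hμ hle =>
    hBD _ hmix κ' hrcp' μ hμ ⟨2, two_pos, hlaw ▸ hle⟩
  have hle := Measure.avg_comm (η₀.map (eval h 0)) _ ▸ Measure.le_two_smul_avg (η.map (eval h 0)) _
  -- by uniqueness at the initial law of `η`, `κ'` also disintegrates `η`
  have hκ'η : IsRCP h η κ' := by
    have hac := Measure.absolutelyContinuous_of_le_smul (hlaw ▸ hle)
    have hbind := huniq _ _ (hBD' _ inferInstance hle) hη
      (map_bind_of_ae_map_eq_dirac (measurable_eval h 0) hκ' (hac.ae_le hrcp'.ae_map_eq_dirac))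
    simpa only [hbind] using hrcp'.isRCP_bind_of_absolutelyContinuous hκ' hac
  rw [Measure.bind_congr_right (hνη.ae_le (hrcp.ae_eq hκ hκ' hκ'η))]
  exact hBD' _ inferInstance (Measure.le_two_smul_avg _ _)

variable {m : Measure (Ed d)} [SFinite m]

theorem exists_isRMF_of_wellPosed (hCS : ConvexStable h a b R)
    (hBD : BoundedDisintStable h a b R) (hFPE : ∀ μ ∈ R, IsFPE 0 T a b μ)
    (hdomin : ∀ ν ∈ initialLaws R, ν ≪ m)
    (hmin : ∀ A, MeasurableSet A → 0 < m A → ∃ ν ∈ initialLaws R, 0 < ν A)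
    (hsol : RRegSolvable h a b R) (huniq : RRegUnique h a b R) : ∃ ηx, IsRMF h a b R ηx := by
  rcases (initialLaws R).eq_empty_or_nonempty with hempty | hne
  · obtain ⟨κ, -, hrcp, hstart⟩ :=
      exists_isRCP_map_eq_dirac h (Measure.dirac (ContinuousMap.const _ 0))
    exact ⟨κ, hrcp.1, hrcp.2.1, hstart, fun ν hν => (hempty.subset hν).elim⟩
  obtain ⟨ν', hν', hmν'⟩ := exists_initialLaw_absolutelyContinuous hCS hFPE hdomin hmin hsol hne
  obtain ⟨η, hη, rfl⟩ := hsol ν' hν'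
  have := hη.1.prob
  obtain ⟨κ, hκ, hrcp, hstart⟩ := exists_isRCP_map_eq_dirac h η
  exact ⟨κ, hrcp.1, hrcp.2.1, hstart, fun ν hν =>
    hBD.rRegMP_bind_of_isRCP hCS hFPE hsol huniq hη hκ hrcp hν ((hdomin ν hν).trans hmν')⟩

theorem IsRMF.ae_eq_of_wellPosed (hCS : ConvexStable h a b R) (hFPE : ∀ μ ∈ R, IsFPE 0 T a b μ)
    (hdomin : ∀ ν ∈ initialLaws R, ν ≪ m)
    (hmin : ∀ A, MeasurableSet A → 0 < m A → ∃ ν ∈ initialLaws R, 0 < ν A)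
    (hsol : RRegSolvable h a b R) (huniq : RRegUnique h a b R)
    {η₁ η₂ : Ed d → Measure (PathSp d 0 T)} (h₁ : IsRMF h a b R η₁) (h₂ : IsRMF h a b R η₂) :
    ∀ᵐ x ∂m, η₁ x = η₂ x := by
  rcases (initialLaws R).eq_empty_or_nonempty with hempty | hne
  · have hm : m = 0 := by
      by_contra hm
      obtain ⟨ν, hν, -⟩ :=
        hmin univ .univ (pos_iff_ne_zero.2 (Measure.measure_univ_ne_zero.2 hm))
      exact hempty.subset hν
    simp [hm]
  obtain ⟨ν', hν', hmν'⟩ := exists_initialLaw_absolutelyContinuous hCS hFPE hdomin hmin hsol hne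
  have hreg₁ := h₁.2.2.2 ν' hν'
  have := hreg₁.1.prob
  have hbind := huniq _ _ hreg₁ (h₂.2.2.2 ν' hν') (by rw [h₁.map_eval_bind, h₂.map_eval_bind])
  have hae := (h₁.isRCP_bind ν').ae_eq h₁.measurable h₂.measurable (hbind ▸ h₂.isRCP_bind ν')
  rw [h₁.map_eval_bind] at hae
  exact hmν'.ae_le hae

theorem IsRMF.eq_bind_of_ae_unique (hCS : ConvexStable h a b R) (hAC : ACDisintStable h a b R)
    (hFPE : ∀ μ ∈ R, IsFPE 0 T a b μ) (hdomin : ∀ ν ∈ initialLaws R, ν ≪ m)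
    (hmin : ∀ A, MeasurableSet A → 0 < m A → ∃ ν ∈ initialLaws R, 0 < ν A)
    (hf : IsRMF h a b R ηx) (huniq : ∀ η', IsRMF h a b R η' → ∀ᵐ x ∂m, η' x = ηx x)
    {η : Measure (PathSp d 0 T)} (hη : RRegMP h a b R η) :
    η = (η.map (eval h 0)).bind ηx := by
  have hν₀ := hη.map_eval_zero_mem
  obtain ⟨ν', hν', hmν'⟩ := exists_initialLaw_absolutelyContinuous hCS hFPE hdomin hmin
    (fun ν hν => ⟨ν.bind ηx, hf.2.2.2 ν hν, hf.map_eval_bind ν⟩) ⟨_, hν₀⟩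
  have hθ := hf.2.2.2 ν' hν'
  have hmix := hCS.rRegMP_avg hFPE hη hθ
  have := hη.1.prob
  have := hθ.1.prob
  obtain ⟨κ, hκ, hrcp, hstart⟩ := exists_isRCP_map_eq_dirac h (Measure.avg η (ν'.bind ηx))
  have hlaw := Measure.map_avg (measurable_eval h 0) η (ν'.bind ηx)
  rw [hf.map_eval_bind] at hlaw
  have hν'mix : ν' ≪ (Measure.avg η (ν'.bind ηx)).map (eval h 0) := by
    rw [hlaw, Measure.avg_comm]
    exact Measure.absolutelyContinuous_avg _ _
  -- the disintegration of the mixture is a flow, hence it agrees with `ηx`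
  have hκae : ∀ᵐ x ∂m, κ x = ηx x := huniq κ ⟨hrcp.1, hrcp.2.1, hstart, fun ν hν =>
    hAC _ hmix κ hrcp ν hν (((hdomin ν hν).trans hmν').trans hν'mix)⟩
  refine Measure.eq_of_avg_eq_avg (θ := ν'.bind ηx) ?_
  calc Measure.avg η (ν'.bind ηx)
      = ((Measure.avg η (ν'.bind ηx)).map (eval h 0)).bind κ := hrcp.2.2.1.symm
    _ = Measure.avg ((η.map (eval h 0)).bind κ) (ν'.bind κ) := by
        rw [hlaw, Measure.avg_bind hκ]
    _ = _ := by
        rw [Measure.bind_congr_right ((hdomin _ hν₀).ae_le hκae),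
          Measure.bind_congr_right ((hdomin _ hν').ae_le hκae)]

end Flows

theorem wellposedness_iff_flow_domination_general (hT : 0 < T)
    (a : ℝ → Ed d → Matrix (Fin d) (Fin d) ℝ) (b : ℝ → Ed d → Ed d)
    (R : Set (ℝ → Measure (Ed d)))
    (hR : ∀ μ ∈ R, (∀ t ∈ Icc (0 : ℝ) T, IsProbabilityMeasure (μ t)) ∧
      NarrowlyCts 0 T μ ∧ IsFPE 0 T a b μ)
    (m : Measure (Ed d)) (hm : SigmaFinite m)
    -- domination: every initial law in 𝓡₀ is absolutely continuous w.r.t. m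
    (hdomin : ∀ ν₀ : Measure (Ed d), (∃ μ ∈ R, μ 0 = ν₀) → ν₀ ≪ m)
    -- minimality of m
    (hmin : ∀ A : Set (Ed d), MeasurableSet A → 0 < m A →
      ∃ ν₀ : Measure (Ed d), (∃ μ ∈ R, μ 0 = ν₀) ∧ 0 < ν₀ A) :
    -- (i) ⟹ (ii) under convex and bounded-disintegration stability:
    ((ConvexStable hT.le a b R → BoundedDisintStable hT.le a b R →
      (∃ sel : Measure (Ed d) → Measure (PathSp d 0 T), Measurable sel ∧
        ∀ ν₀ : Measure (Ed d), (∃ μ ∈ R, μ 0 = ν₀) →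
          RRegMP hT.le a b R (sel ν₀) ∧ Measure.map (eval hT.le 0) (sel ν₀) = ν₀ ∧
          ∀ η, RRegMP hT.le a b R η → Measure.map (eval hT.le 0) η = ν₀ →
            η = sel ν₀) →
      ((∃ ηx, IsRMF hT.le a b R ηx) ∧
        ∀ η1 η2 : Ed d → Measure (PathSp d 0 T),
          IsRMF hT.le a b R η1 → IsRMF hT.le a b R η2 →
          ∀ᵐ x ∂m, η1 x = η2 x))) ∧
    -- (ii) ⟹ (i) under convex and a.c.-disintegration stability:
    ((ConvexStable hT.le a b R → ACDisintStable hT.le a b R →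
      ((∃ ηx, IsRMF hT.le a b R ηx) ∧
        ∀ η1 η2 : Ed d → Measure (PathSp d 0 T),
          IsRMF hT.le a b R η1 → IsRMF hT.le a b R η2 →
          ∀ᵐ x ∂m, η1 x = η2 x) →
      (∃ sel : Measure (Ed d) → Measure (PathSp d 0 T), Measurable sel ∧
        ∀ ν₀ : Measure (Ed d), (∃ μ ∈ R, μ 0 = ν₀) →
          RRegMP hT.le a b R (sel ν₀) ∧ Measure.map (eval hT.le 0) (sel ν₀) = ν₀ ∧
          ∀ η, RRegMP hT.le a b R η → Measure.map (eval hT.le 0) η = ν₀ →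
            η = sel ν₀))) := by
  have hFPE : ∀ μ ∈ R, IsFPE 0 T a b μ := fun μ hμ => (hR μ hμ).2.2
  refine ⟨fun hCS hBD ⟨sel, _, hsel⟩ => ?_, fun hCS hAC ⟨⟨ηx, hηx⟩, huniq⟩ => ?_⟩
  · have hsol : RRegSolvable hT.le a b R := fun ν hν => ⟨sel ν, (hsel ν hν).1, (hsel ν hν).2.1⟩
    have huniq : RRegUnique hT.le a b R := fun η₁ η₂ h₁ h₂ h₁₂ =>
      have hsel₁ := (hsel _ h₁.map_eval_zero_mem).2.2
      (hsel₁ η₁ h₁ rfl).trans (hsel₁ η₂ h₂ h₁₂.symm).symm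
    exact ⟨exists_isRMF_of_wellPosed hCS hBD hFPE hdomin hmin hsol huniq,
      fun η₁ η₂ h₁ h₂ => h₁.ae_eq_of_wellPosed hCS hFPE hdomin hmin hsol huniq h₂⟩
  · refine ⟨fun ν => ν.bind ηx, Measure.measurable_bind' hηx.measurable,
      fun ν hν => ⟨hηx.2.2.2 ν hν, hηx.map_eval_bind ν, fun η hη hlaw => ?_⟩⟩
    rw [hηx.eq_bind_of_ae_unique hCS hAC hFPE hdomin hmin (fun η' hη' => huniq η' ηx hη' hηx) hη,
      hlaw]

/-- **Equivalence between well-posedness and martingale flows under a domination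
condition**. -/
theorem wellposedness_iff_flow_domination (hd : 1 ≤ d) (hT : 0 < T)
    (a : ℝ → Ed d → Matrix (Fin d) (Fin d) ℝ) (b : ℝ → Ed d → Ed d)
    (hsym : ∀ t x, (a t x).IsSymm ∧ (a t x).PosSemidef)
    (R : Set (ℝ → Measure (Ed d)))
    (hR : ∀ μ ∈ R, (∀ t ∈ Icc (0 : ℝ) T, IsProbabilityMeasure (μ t)) ∧
      NarrowlyCts 0 T μ ∧ IsFPE 0 T a b μ)
    (m : Measure (Ed d)) (hm : SigmaFinite m)
    -- domination: every initial law in 𝓡₀ is absolutely continuous w.r.t. m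
    (hdomin : ∀ ν₀ : Measure (Ed d), (∃ μ ∈ R, μ 0 = ν₀) → ν₀ ≪ m)
    -- minimality of m
    (hmin : ∀ A : Set (Ed d), MeasurableSet A → 0 < m A →
      ∃ ν₀ : Measure (Ed d), (∃ μ ∈ R, μ 0 = ν₀) ∧ 0 < ν₀ A) :
    -- (i) ⟹ (ii) under convex and bounded-disintegration stability:
    ((ConvexStable hT.le a b R → BoundedDisintStable hT.le a b R →
      (∃ sel : Measure (Ed d) → Measure (PathSp d 0 T), Measurable sel ∧
        ∀ ν₀ : Measure (Ed d), (∃ μ ∈ R, μ 0 = ν₀) →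
          RRegMP hT.le a b R (sel ν₀) ∧ Measure.map (eval hT.le 0) (sel ν₀) = ν₀ ∧
          ∀ η, RRegMP hT.le a b R η → Measure.map (eval hT.le 0) η = ν₀ →
            η = sel ν₀) →
      ((∃ ηx, IsRMF hT.le a b R ηx) ∧
        ∀ η1 η2 : Ed d → Measure (PathSp d 0 T),
          IsRMF hT.le a b R η1 → IsRMF hT.le a b R η2 →
          ∀ᵐ x ∂m, η1 x = η2 x))) ∧
    -- (ii) ⟹ (i) under convex and a.c.-disintegration stability:
    ((ConvexStable hT.le a b R → ACDisintStable hT.le a b R →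
      ((∃ ηx, IsRMF hT.le a b R ηx) ∧
        ∀ η1 η2 : Ed d → Measure (PathSp d 0 T),
          IsRMF hT.le a b R η1 → IsRMF hT.le a b R η2 →
          ∀ᵐ x ∂m, η1 x = η2 x) →
      (∃ sel : Measure (Ed d) → Measure (PathSp d 0 T), Measurable sel ∧
        ∀ ν₀ : Measure (Ed d), (∃ μ ∈ R, μ 0 = ν₀) →
          RRegMP hT.le a b R (sel ν₀) ∧ Measure.map (eval hT.le 0) (sel ν₀) = ν₀ ∧
          ∀ η, RRegMP hT.le a b R η → Measure.map (eval hT.le 0) η = ν₀ →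
            η = sel ν₀))) :=
  wellposedness_iff_flow_domination_general hT a b R hR m hm hdomin hmin

end
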